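/- Let dA, dB ≥ 2 and suppose { (a^{(r)}_i ⊗ b^{(r)}_j) : r = 1,…,k } is a family of k pairwise mutually unbiased product bases of EuclideanSpace ℂ (Fin dA × Fin dB). Then the k local bases (a^{(r)}_i), r = 1,…,k, are pairwise mutually unbiased orthonormal bases of ℂ^{dA} (and likewise the (b^{(r)}_j) are pairwise mutually unbiased in ℂ^{dB}). Consequently the number of pairwise mutually unbiased product bases is at most the minimum of the maximal numbers of MUBs in dimensions dA and dB. -/

import Mathlib

/-- The product vector `(u ⊗ v)(a,b) = u(a)·v(b)`. -/
noncomputable def tens {dA dB : ℕ} (u : EuclideanSpace ℂ (Fin dA))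
    (v : EuclideanSpace ℂ (Fin dB)) : EuclideanSpace ℂ (Fin dA × Fin dB) :=
  WithLp.toLp 2 (fun ab : Fin dA × Fin dB => u ab.1 * v ab.2)

/-- Two orthonormal bases of `ℂ^d` are mutually unbiased. -/
def IsMUBPair {d : ℕ} (e f : OrthonormalBasis (Fin d) ℂ (EuclideanSpace ℂ (Fin d))) : Prop :=
  ∀ i j : Fin d, ‖(inner ℂ (e i) (f j) : ℂ)‖ ^ 2 = 1 / (d : ℝ)

/-- The maximal number of pairwise mutually unbiased bases in dimension `d`. -/
noncomputable def maxMUBs (d : ℕ) : ℕ :=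
  sSup {k : ℕ | ∃ f : Fin k → OrthonormalBasis (Fin d) ℂ (EuclideanSpace ℂ (Fin d)),
    ∀ r s : Fin k, r ≠ s → IsMUBPair (f r) (f s)}


/-! Since `⟪a ⊗ b, a' ⊗ b'⟫ = ⟪a, a'⟫ ⟪b, b'⟫`, unbiasedness of the product bases says
`‖⟪aᵢ, a'ᵢ'⟫‖² ‖⟪bⱼ, b'ⱼ'⟫‖² = 1 / (dA dB)`; summing over `j'` and using Parseval for `b'`
gives `‖⟪aᵢ, a'ᵢ'⟫‖² = 1 / dA`.

For `maxMUBs` to be a genuine supremum the number of MUBs in dimension `d ≥ 2` must be bounded: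
for pairwise MUBs `e⁽ʳ⁾` the vectors `|e⁽ʳ⁾₀⟩⟨e⁽ʳ⁾₀| - |e⁽ʳ⁾₁⟩⟨e⁽ʳ⁾₁|` of `ℂ^(d × d)` have squared
norm `2` and are pairwise orthogonal, since all four cross terms equal `1 / d`; hence there are
at most `d²` of them. -/

open scoped InnerProductSpace

lemma inner_tens {dA dB : ℕ} (u u' : EuclideanSpace ℂ (Fin dA))
    (v v' : EuclideanSpace ℂ (Fin dB)) :
    ⟪tens u v, tens u' v'⟫_ℂ = ⟪u, u'⟫_ℂ * ⟪v, v'⟫_ℂ := by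
  simp only [tens, PiLp.inner_apply, RCLike.inner_apply, Finset.sum_mul_sum,
    Fintype.sum_prod_type, map_mul]
  exact Finset.sum_congr rfl fun i _ => Finset.sum_congr rfl fun j _ => by ring

lemma IsMUBPair.of_norm_sq_inner_mul {dA dB : ℕ} (hB : 0 < dB)
    (e e' : OrthonormalBasis (Fin dA) ℂ (EuclideanSpace ℂ (Fin dA)))
    (f f' : OrthonormalBasis (Fin dB) ℂ (EuclideanSpace ℂ (Fin dB)))
    (h : ∀ i i' j j', ‖⟪e i, e' i'⟫_ℂ‖ ^ 2 * ‖⟪f j, f' j'⟫_ℂ‖ ^ 2 = 1 / (dA * dB : ℝ)) :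
    IsMUBPair e e' := by
  intro i i'
  let j₀ : Fin dB := ⟨0, hB⟩
  calc ‖⟪e i, e' i'⟫_ℂ‖ ^ 2
      = ‖⟪e i, e' i'⟫_ℂ‖ ^ 2 * ∑ j', ‖⟪f j₀, f' j'⟫_ℂ‖ ^ 2 := by
        rw [f'.sum_sq_norm_inner_left, f.orthonormal.1 j₀, one_pow, mul_one]
    _ = ∑ _j' : Fin dB, 1 / (dA * dB : ℝ) := by
        rw [Finset.mul_sum]
        exact Finset.sum_congr rfl fun j' _ => h i i' j₀ j'
    _ = 1 / dA := by
        rw [Finset.sum_const, Finset.card_univ, Fintype.card_fin, nsmul_eq_mul]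
        field_simp

/-- The rank-one projector `|u⟩⟨u|` as the vector `u ⊗ ū`, so that inner products of such vectors
are Hilbert–Schmidt inner products of projectors. -/
noncomputable def vecProj {d : ℕ} (u : EuclideanSpace ℂ (Fin d)) :
    EuclideanSpace ℂ (Fin d × Fin d) :=
  tens u (WithLp.toLp 2 (star u.ofLp))

lemma inner_vecProj {d : ℕ} (u v : EuclideanSpace ℂ (Fin d)) :
    ⟪vecProj u, vecProj v⟫_ℂ = ((‖⟪u, v⟫_ℂ‖ ^ 2 : ℝ) : ℂ) := by
  have inner_conj : ⟪(WithLp.toLp 2 (star u.ofLp) : EuclideanSpace ℂ (Fin d)),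
      WithLp.toLp 2 (star v.ofLp)⟫_ℂ = star ⟪u, v⟫_ℂ := by
    simp [PiLp.inner_apply]
  rw [vecProj, vecProj, inner_tens, inner_conj, RCLike.star_def, RCLike.mul_conj]
  norm_cast

theorem card_le_sq_of_pairwise_isMUBPair {d k : ℕ} (hd : 2 ≤ d)
    (f : Fin k → OrthonormalBasis (Fin d) ℂ (EuclideanSpace ℂ (Fin d)))
    (hf : Pairwise fun r s => IsMUBPair (f r) (f s)) : k ≤ d ^ 2 := by
  let i₀ : Fin d := ⟨0, by omega⟩
  let i₁ : Fin d := ⟨1, by omega⟩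
  have hi : i₀ ≠ i₁ := by simp [i₀, i₁, Fin.ext_iff]
  let G : Fin k → EuclideanSpace ℂ (Fin d × Fin d) :=
    fun r => vecProj (f r i₀) - vecProj (f r i₁)
  have inner_G : ∀ r s, ⟪G r, G s⟫_ℂ = ((‖⟪f r i₀, f s i₀⟫_ℂ‖ ^ 2 - ‖⟪f r i₀, f s i₁⟫_ℂ‖ ^ 2
      - ‖⟪f r i₁, f s i₀⟫_ℂ‖ ^ 2 + ‖⟪f r i₁, f s i₁⟫_ℂ‖ ^ 2 : ℝ) : ℂ) := by
    intro r s
    simp only [G, inner_sub_left, inner_sub_right, inner_vecProj]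
    push_cast
    ring
  have G_ne_zero : ∀ r, G r ≠ 0 := by
    intro r hr
    have h := inner_G r r
    norm_num [hr, orthonormal_iff_ite.mp (f r).orthonormal, hi, hi.symm] at h
  have G_orthogonal : Pairwise fun r s => ⟪G r, G s⟫_ℂ = 0 := by
    intro r s hrs
    rw [inner_G, hf hrs i₀ i₀, hf hrs i₀ i₁, hf hrs i₁ i₀, hf hrs i₁ i₁]
    simp
  simpa [finrank_euclideanSpace, sq] using
    (linearIndependent_of_ne_zero_of_inner_eq_zero G_ne_zero G_orthogonal).fintype_card_le_finrank

theorem le_maxMUBs {d k : ℕ} (hd : 2 ≤ d)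
    (f : Fin k → OrthonormalBasis (Fin d) ℂ (EuclideanSpace ℂ (Fin d)))
    (hf : Pairwise fun r s => IsMUBPair (f r) (f s)) : k ≤ maxMUBs d :=
  le_csSup ⟨d ^ 2, fun _ ⟨g, hg⟩ => card_le_sq_of_pairwise_isMUBPair hd g hg⟩ ⟨f, hf⟩

/-- If `k` product bases of `ℂ^{dA} ⊗ ℂ^{dB}` are pairwise mutually unbiased, then their
local factors form pairwise mutually unbiased bases of `ℂ^{dA}` (resp. `ℂ^{dB}`); hence
the number of pairwise mutually unbiased product bases is at most the minimum of the
maximal numbers of MUBs in dimensions `dA` and `dB`. -/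
theorem product_mub_local_mub (dA dB : ℕ) (hA : 2 ≤ dA) (hB : 2 ≤ dB) (k : ℕ)
    (a : Fin k → OrthonormalBasis (Fin dA) ℂ (EuclideanSpace ℂ (Fin dA)))
    (b : Fin k → OrthonormalBasis (Fin dB) ℂ (EuclideanSpace ℂ (Fin dB)))
    (hmub : ∀ r s : Fin k, r ≠ s →
      ∀ (i i' : Fin dA) (j j' : Fin dB),
        ‖(inner ℂ (tens (a r i) (b r j)) (tens (a s i') (b s j')) : ℂ)‖ ^ 2
          = 1 / (dA * dB : ℝ)) :
    (∀ r s : Fin k, r ≠ s → IsMUBPair (a r) (a s)) ∧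
    (∀ r s : Fin k, r ≠ s → IsMUBPair (b r) (b s)) ∧
    k ≤ min (maxMUBs dA) (maxMUBs dB) := by
  have hmub' : ∀ r s, r ≠ s → ∀ i i' j j',
      ‖⟪a r i, a s i'⟫_ℂ‖ ^ 2 * ‖⟪b r j, b s j'⟫_ℂ‖ ^ 2 = 1 / (dA * dB : ℝ) := by
    intro r s hrs i i' j j'
    rw [← mul_pow, ← norm_mul, ← inner_tens, hmub r s hrs]
  have ha : ∀ r s, r ≠ s → IsMUBPair (a r) (a s) := fun r s hrs =>
    .of_norm_sq_inner_mul (by omega) _ _ (b r) (b s) (hmub' r s hrs)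
  have hb : ∀ r s, r ≠ s → IsMUBPair (b r) (b s) := fun r s hrs =>
    .of_norm_sq_inner_mul (by omega) _ _ (a r) (a s) fun j j' i i' => by
      rw [mul_comm, mul_comm (dB : ℝ), hmub' r s hrs]
  exact ⟨ha, hb, le_min (le_maxMUBs hA a ha) (le_maxMUBs hB b hb)⟩
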